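/- arXiv:math/0504375 — 2 statements merged into one kernel-verified Lean document; each statement's English description precedes it below -/
import Mathlib

section
/- If the domain of discourse is a set M (together with a binary relation interpreting membership), then the satisfaction relation for almost self-referential formulas over M is well-defined: for every almost self-referential formula (φ, R, x) and every assignment of the parameter, there is a unique truth value, determined by recursion along the well-founded part R_w of R. -/
/-! ### First-order formulas of set theory (with optional extra unary predicate symbols `P`) -/

/-- First-order formulas in the language of set theory (`∈`, `=`), with variables indexed by `ℕ`
and extra unary predicate symbols drawn from `P`. -/
inductive Fml (P : Type) : Type where
  | mem : ℕ → ℕ → Fml P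
  | eq : ℕ → ℕ → Fml P
  | pr : P → ℕ → Fml P
  | not : Fml P → Fml P
  | and : Fml P → Fml P → Fml P
  | all : ℕ → Fml P → Fml P

namespace Fml

variable {P : Type}

/-- Tarskian satisfaction for `Fml P` in a structure with universe `M`, relativized to the
class `Dom`, with `E` interpreting `∈` and `I` interpreting the extra unary predicates. -/
def Sat {M : Type*} (Dom : M → Prop) (E : M → M → Prop) (I : P → M → Prop) :
    Fml P → (ℕ → M) → Prop
  | .mem i j, v => E (v i) (v j)
  | .eq i j, v => v i = v j
  | .pr p i, v => I p (v i)
  | .not φ, v => ¬ Sat Dom E I φ v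
  | .and φ ψ, v => Sat Dom E I φ v ∧ Sat Dom E I ψ v
  | .all n φ, v => ∀ a, Dom a → Sat Dom E I φ (Function.update v n a)

def imp (φ ψ : Fml P) : Fml P := .not (.and φ (.not ψ))
def orr (φ ψ : Fml P) : Fml P := .not (.and (.not φ) (.not ψ))
def iffF (φ ψ : Fml P) : Fml P := .and (imp φ ψ) (imp ψ φ)
def ex (n : ℕ) (φ : Fml P) : Fml P := .not (.all n (.not φ))
def ball (n w : ℕ) (φ : Fml P) : Fml P := .all n (imp (.mem n w) φ)
def bex (n w : ℕ) (φ : Fml P) : Fml P := ex n (.and (.mem n w) φ)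

/-- Free variables. -/
def free : Fml P → Finset ℕ
  | .mem i j => {i, j}
  | .eq i j => {i, j}
  | .pr _ i => {i}
  | .not φ => free φ
  | .and φ ψ => free φ ∪ free ψ
  | .all n φ => (free φ).erase n

/-- Bound variables. -/
def bnd : Fml P → Finset ℕ
  | .mem _ _ => ∅
  | .eq _ _ => ∅
  | .pr _ _ => ∅
  | .not φ => bnd φ
  | .and φ ψ => bnd φ ∪ bnd ψ
  | .all n φ => insert n (bnd φ)

/-- Substitution of variable `j` for (free occurrences of) variable `i`. -/
def subst (i j : ℕ) : Fml P → Fml P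
  | .mem a b => .mem (if a = i then j else a) (if b = i then j else b)
  | .eq a b => .eq (if a = i then j else a) (if b = i then j else b)
  | .pr p a => .pr p (if a = i then j else a)
  | .not φ => .not (subst i j φ)
  | .and φ ψ => .and (subst i j φ) (subst i j ψ)
  | .all n φ => if n = i then .all n φ else .all n (subst i j φ)

/-- Universal closure. -/
def closure (φ : Fml P) : Fml P := ((free φ).sort (· ≤ ·)).foldr .all φ

/-! #### Auxiliary defined formulas.
Each helper takes an "offset" `o`; its internally bound variables are `o, o+1, …`;
it is used with `o` larger than all argument variables. -/

def subsetF (a b o : ℕ) : Fml P := .all o (imp (.mem o a) (.mem o b))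

def transF (t o : ℕ) : Fml P :=
  .all o (imp (.mem o t) (.all (o+1) (imp (.mem (o+1) o) (.mem (o+1) t))))

/-- `x` is an ordinal (a transitive set of transitive sets; we assume foundation). -/
def isOrdF (x o : ℕ) : Fml P := .and (transF x o) (.all o (imp (.mem o x) (transF o (o+1))))

/-- `x` is a (nonzero) limit ordinal. -/
def isLimF (x o : ℕ) : Fml P :=
  .and (isOrdF x o) (.and (ex o (.mem o x))
    (.all o (imp (.mem o x) (ex (o+1) (.and (.mem (o+1) x) (.mem o (o+1)))))))

/-- `x` is an infinite ordinal (an ordinal that is, or contains, a limit ordinal). -/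
def isInfOrdF (x o : ℕ) : Fml P :=
  .and (isOrdF x o) (orr (isLimF x o) (bex o x (isLimF o (o+1))))

/-- `p` is the Kuratowski pair `⟨u, v⟩`. -/
def kpairF (p u v o : ℕ) : Fml P :=
  .all o (iffF (.mem o p)
    (orr (.all (o+1) (iffF (.mem (o+1) o) (.eq (o+1) u)))
         (.all (o+1) (iffF (.mem (o+1) o) (orr (.eq (o+1) u) (.eq (o+1) v))))))

/-- `f` is a (total) function from `t` to `a` (coded by Kuratowski pairs). -/
def isFuncF (f t a o : ℕ) : Fml P :=
  .and (.and
    (ball o f (bex (o+1) t (bex (o+2) a (kpairF o (o+1) (o+2) (o+3)))))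
    (ball (o+1) t (bex (o+2) a (bex o f (kpairF o (o+1) (o+2) (o+3))))))
    (ball o f (ball (o+5) f (.all (o+1) (.all (o+2) (.all (o+6)
      (imp (.and (kpairF o (o+1) (o+2) (o+3)) (kpairF (o+5) (o+1) (o+6) (o+3)))
        (.eq (o+6) (o+2))))))))

/-- `f` is an injection of `t` into `a`. -/
def injF (f t a o : ℕ) : Fml P :=
  .and (isFuncF f t a o)
    (ball o f (ball (o+5) f (.all (o+1) (.all (o+2) (.all (o+6)
      (imp (.and (kpairF o (o+1) (o+2) (o+3)) (kpairF (o+5) (o+6) (o+2) (o+3)))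
        (.eq (o+6) (o+1))))))))

/-- `t` is strictly less numerous than `a`. -/
def lessNumF (t a o : ℕ) : Fml P :=
  .and (ex o (injF o t a (o+1))) (.not (ex o (injF o a t (o+1))))

/-- `t` is the transitive closure of `x`: the least transitive set including `x`. -/
def isTransClF (x t o : ℕ) : Fml P :=
  .and (.and (subsetF x t o) (transF t o))
    (.all o (imp (.and (subsetF x o (o+1)) (transF o (o+1)))
      (subsetF t o (o+1))))

/-- `k` is a regular ordinal: no function from a smaller ordinal into `k` is cofinal. -/
def isRegF (k o : ℕ) : Fml P :=
  ball o k (.all (o+1) (imp (isFuncF (o+1) o k (o+10))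
    (bex (o+2) k (ball (o+3) (o+1) (.all (o+4) (.all (o+5)
      (imp (kpairF (o+3) (o+4) (o+5) (o+6)) (.mem (o+5) (o+2)))))))))

/-- `k` is a strong limit: for every `b ∈ k` the power set of `b` injects into some `g ∈ k`. -/
def isStrongLimF (k o : ℕ) : Fml P :=
  ball o k (ex (o+1) (.and
    (.all (o+2) (iffF (.mem (o+2) (o+1)) (subsetF (o+2) o (o+3))))
    (bex (o+4) k (ex (o+5) (injF (o+5) (o+1) (o+4) (o+10))))))

/-- `k` is an uncountable ordinal: `ω ∈ k` (least limit ordinal) and `k` does not inject into `ω`. -/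
def isUncountableF (k o : ℕ) : Fml P :=
  bex o k (.and (.and (isLimF o (o+2)) (ball (o+1) o (.not (isLimF (o+1) (o+2)))))
    (.not (ex (o+1) (injF (o+1) k o (o+10)))))

/-- `k` is an inaccessible cardinal: uncountable, regular and a strong limit. -/
def isInaccF (k o : ℕ) : Fml P :=
  .and (.and (isOrdF k o) (isUncountableF k o))
    (.and (isRegF k o) (isStrongLimF k o))

/-- `c` is a closed unbounded subset of `k`. -/
def isClubF (c k o : ℕ) : Fml P :=
  .and (.and (subsetF c k o) (ball o k (bex (o+1) c (.mem o (o+1)))))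
    (ball o k (imp (.and (isLimF o (o+5))
        (ball (o+1) o (bex (o+2) c (.and (.mem (o+1) (o+2)) (.mem (o+2) o)))))
      (.mem o c)))

/-- `k` is a Mahlo cardinal: inaccessible, and every club in `k` contains a regular
(infinite) ordinal. -/
def isMahloF (k o : ℕ) : Fml P :=
  .and (isInaccF k o)
    (.all o (imp (isClubF o k (o+2))
      (bex (o+1) o (.and (isInfOrdF (o+1) (o+10)) (isRegF (o+1) (o+10))))))

/-! #### The axioms of the set theories considered -/

def extAx : Fml P := .all 0 (.all 1 (imp (.all 2 (iffF (.mem 2 0) (.mem 2 1))) (.eq 0 1)))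
def pairAx : Fml P := .all 0 (.all 1 (ex 2 (.all 3 (iffF (.mem 3 2) (orr (.eq 3 0) (.eq 3 1))))))
def unionAx : Fml P := .all 0 (ex 1 (.all 2 (iffF (.mem 2 1) (bex 3 0 (.mem 2 3)))))
def powAx : Fml P := .all 0 (ex 1 (.all 2 (iffF (.mem 2 1) (subsetF 2 0 3))))
def emptyAx : Fml P := ex 0 (.all 1 (.not (.mem 1 0)))
def infAx : Fml P :=
  ex 0 (.and (bex 1 0 (.all 2 (.not (.mem 2 1))))
    (ball 1 0 (bex 2 0 (.all 3 (iffF (.mem 3 2) (orr (.mem 3 1) (.eq 3 1)))))))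
def foundAx : Fml P :=
  .all 0 (imp (ex 1 (.mem 1 0)) (bex 1 0 (.all 2 (imp (.mem 2 1) (.not (.mem 2 0))))))
def choiceAx : Fml P :=
  .all 0 (imp (.and (ball 1 0 (ex 2 (.mem 2 1)))
      (ball 1 0 (ball 2 0 (imp (.not (.eq 1 2)) (.not (ex 3 (.and (.mem 3 1) (.mem 3 2))))))))
    (ex 4 (ball 1 0 (ex 5 (.and (.and (.mem 5 1) (.mem 5 4))
      (.all 6 (imp (.and (.mem 6 1) (.mem 6 4)) (.eq 6 5))))))))
def tcAx : Fml P := .all 0 (ex 1 (isTransClF 0 1 10))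
/-- For every `a` there is the set of all sets whose transitive closure is less numerous
than `a`. -/
def hAx : Fml P :=
  .all 0 (ex 1 (.all 2 (iffF (.mem 2 1) (ex 3 (.and (isTransClF 2 3 10) (lessNumF 3 0 20))))))

/-- An instance of the separation schema for `φ`. -/
def sepInst (φ : Fml P) (z a b : ℕ) : Fml P :=
  closure (.all a (ex b (.all z (iffF (.mem z b) (.and (.mem z a) φ)))))

def sepScheme : Set (Fml P) :=
  {ψ | ∃ (φ : Fml P) (z a b : ℕ), z ≠ a ∧ z ≠ b ∧ a ≠ b ∧ b ∉ free φ ∧ a ∉ free φ ∧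
    ψ = sepInst φ z a b}

/-- An instance of the replacement schema for `φ` (with distinguished variables `x`, `y`). -/
def repInst (φ : Fml P) (x y y' a b : ℕ) : Fml P :=
  closure (.all a (imp
    (ball x a (ex y (.and φ (.all y' (imp (subst y y' φ) (.eq y' y))))))
    (ex b (ball x a (bex y b φ)))))

def repScheme : Set (Fml P) :=
  {ψ | ∃ (φ : Fml P) (x y y' a b : ℕ), [x, y, y', a, b].Nodup ∧
    y' ∉ free φ ∧ y' ∉ bnd φ ∧ a ∉ free φ ∧ b ∉ free φ ∧
    ψ = repInst φ x y y' a b}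

/-- Δ₀ (bounded-quantifier) formulas. -/
inductive IsDelta0 : Fml P → Prop
  | mem (i j : ℕ) : IsDelta0 (.mem i j)
  | eq (i j : ℕ) : IsDelta0 (.eq i j)
  | pr (p : P) (i : ℕ) : IsDelta0 (.pr p i)
  | not {φ} : IsDelta0 φ → IsDelta0 (.not φ)
  | and {φ ψ} : IsDelta0 φ → IsDelta0 ψ → IsDelta0 (.and φ ψ)
  | ball {φ} (z w : ℕ) : z ≠ w → IsDelta0 φ → IsDelta0 (Fml.ball z w φ)

/-- Σ₁ formulas: blocks of existential quantifiers in front of a Δ₀ formula. -/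
inductive IsSigma1 : Fml P → Prop
  | of_delta0 {φ} : IsDelta0 φ → IsSigma1 φ
  | ex {φ} (n : ℕ) : IsSigma1 φ → IsSigma1 (Fml.ex n φ)

def boundedSepScheme : Set (Fml P) :=
  {ψ | ∃ (φ : Fml P) (z a b : ℕ), IsDelta0 φ ∧ z ≠ a ∧ z ≠ b ∧ a ≠ b ∧ b ∉ free φ ∧
    a ∉ free φ ∧ ψ = sepInst φ z a b}

/-- ZFC minus the power set axiom. -/
def zfcMinusPow : Set (Fml P) :=
  {extAx, pairAx, unionAx, emptyAx, infAx, foundAx, choiceAx} ∪ sepScheme ∪ repScheme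

/-- ZFC.  (Separation and replacement are included for all formulas of the language,
so for `P ≠ ∅` this is ZFC with the schemas extended to the enlarged language.) -/
def zfcAx : Set (Fml P) := insert powAx zfcMinusPow

/-- ZFC minus the axiom of infinity. -/
def zfcMinusInf : Set (Fml P) :=
  {extAx, pairAx, unionAx, powAx, emptyAx, foundAx, choiceAx} ∪ sepScheme ∪ repScheme

/-- Rudimentary set theory: extensionality, foundation, empty set, pairing, union,
existence of transitive closures, existence of the set of all sets with transitive closure
less numerous than a given set, and bounded-quantifier separation. -/
def rudimentary : Set (Fml P) :=
  {extAx, foundAx, emptyAx, pairAx, unionAx, tcAx, hAx} ∪ boundedSepScheme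

/-- `(M, E, I)` (with all of `M` as domain) is a model of the theory `T`. -/
def ModelsTh {M : Type*} (E : M → M → Prop) (I : P → M → Prop) (T : Set (Fml P)) : Prop :=
  ∀ φ ∈ T, ∀ v : ℕ → M, Sat (fun _ => True) E I φ v

/-- Consistency of a theory, rendered semantically (equivalent to syntactic consistency by
the Gödel completeness theorem): the theory has a model. -/
def Con (T : Set (Fml P)) : Prop :=
  ∃ (M : Type) (E : M → M → Prop) (I : P → M → Prop), Nonempty M ∧ ModelsTh E I T

end Fml

namespace Fml

/-- The binary relation on `M` defined by the first-order formula `R`, whose marked argument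
places are the variables `0` and `1`. -/
def relOf {M : Type*} (E : M → M → Prop) (R : Fml Empty) (a b : M) : Prop :=
  Sat (fun _ => True) E (fun p _ => p.elim) R (fun n => if n = 0 then a else b)

/-- The well-founded part of a binary relation: `wfPart r a x` iff `r a x` and there is no
infinite sequence `x, y₁, y₂, …` with `r y₁ x`, `r y₂ y₁`, …. -/
def wfPart {M : Type*} (r : M → M → Prop) (a x : M) : Prop :=
  r a x ∧ ¬ ∃ s : ℕ → M, r (s 0) x ∧ ∀ n, r (s (n + 1)) (s n)

end Fml

/-! Evaluating `f(a)` at the parameter value `x` consults the truth value at `a` only when `a` is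
an `R_w`-predecessor of `x`, and the well-founded part of any relation is well-founded; so the
truth values are determined, uniquely, by well-founded recursion along `R_w`. -/

theorem WellFounded.existsUnique_pred_iff {α : Sort*} {r : α → α → Prop} (hr : WellFounded r)
    (Φ : α → (α → Prop) → Prop)
    (hΦ : ∀ x F G, (∀ y, r y x → (F y ↔ G y)) → (Φ x F ↔ Φ x G)) :
    ∃! F : α → Prop, ∀ x, F x ↔ Φ x F := by
  let F : α → Prop := hr.fix fun x ih => Φ x fun y => ∃ h : r y x, ih y h
  have hF : ∀ x, F x ↔ Φ x F := fun x => by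
    rw [show F x = _ from hr.fix_eq _ x]
    exact hΦ x _ _ fun y hy => exists_prop_of_true hy
  refine ⟨F, hF, fun G hG => funext fun x => propext ?_⟩
  induction x using hr.induction with
  | _ x ih => rw [hG x, hF x]; exact hΦ x G F ih

namespace Fml

theorem wellFounded_wfPart {M : Type*} (r : M → M → Prop) : WellFounded (wfPart r) := by
  refine wellFounded_iff_isEmpty_descending_chain.mpr ⟨fun ⟨s, hs⟩ => ?_⟩
  -- The tail `s 1, s 2, …` is itself an infinite `r`-chain below `s 0`.
  exact (hs 0).2 ⟨fun n => s (n + 1), (hs 0).1, fun n => (hs (n + 1)).1⟩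

end Fml

open Fml in
/-- If the domain of discourse is a set `M` with a binary relation `E`
interpreting membership, then the satisfaction relation for almost self-referential formulas
over `M` is well-defined: for every almost self-referential formula `(φ, R, x)` — `φ` the
formula proper (which may use the special unary predicate symbol `f`), `R` the relation,
the parameter being variable `0` — and every assignment `v` of the remaining parameters,
there is a unique truth-value function `F` (assigning to every value `x` of the parameter
the truth value `F x`), determined by the recursion along the well-founded part of `R`:
`F x` is computed as the value of `φ` at parameter `x`, where `f(a)` evaluates to
`wfPart (relOf E R) a x ∧ F a`. -/
theorem asr_satisfaction_well_defined (M : Type) (E : M → M → Prop)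
    (φ : Fml Unit) (R : Fml Empty) (v : ℕ → M) :
    ∃! F : M → Prop, ∀ x : M,
      F x ↔ Sat (fun _ => True) E (fun _ a => wfPart (relOf E R) a x ∧ F a) φ
        (Function.update v 0 x) := by
  refine (wellFounded_wfPart (relOf E R)).existsUnique_pred_iff _ fun x F G hFG => ?_
  have hI : (fun (_ : Unit) a => wfPart (relOf E R) a x ∧ F a) =
      fun _ a => wfPart (relOf E R) a x ∧ G a :=
    funext₂ fun _ a => propext (and_congr_right (hFG a))
  rw [hI]
end

section
/- In the general extension of set theory by the predicate P, the predicate P is unique: fixing a Gödel numbering {φ_0, φ_1, ...} of sentences of set theory with an extra predicate symbol S, calling n good iff for every ordinal κ there is a unique set S such that (V_κ, ∈, S) satisfies φ_n, and letting P_n be empty if n is not good and otherwise the unique class such that φ_n is true with S interpreted as P_n, the binary predicate P with ∀n∀x (P(n,x) ↔ P_n(x)) is uniquely determined; in particular, by reflection, uniqueness of S for all sufficiently well-behaved models (V_κ, ∈, S) implies uniqueness of each P_n. -/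
/-! ### Set-theoretic semantics over the universe `ZFSet` -/

noncomputable section
open scoped Classical

/-- Satisfaction of first-order formulas over the class `C` of `ZFSet`s, with genuine
membership interpreting `∈` and `I` interpreting the extra predicates. -/
def ZSat {P : Type} (C : ZFSet → Prop) (I : P → ZFSet → Prop) :
    Fml P → (ℕ → ZFSet) → Prop :=
  Fml.Sat C (· ∈ ·) I

/-- The (empty) interpretation of the extra predicates for the pure `∈`-language. -/
def noPred : Empty → ZFSet → Prop := fun p _ => p.elim

/-- `x` is a (von Neumann) ordinal: a transitive set of transitive sets. -/
def IsOrd (x : ZFSet) : Prop := x.IsTransitive ∧ ∀ y ∈ x, ZFSet.IsTransitive y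

/-- Image of a set under an arbitrary (classical) function. -/
def zimage (f : ZFSet → ZFSet) (x : ZFSet) : ZFSet :=
  @ZFSet.image f (Classical.allZFSetDefinable _) x

/-- The cumulative hierarchy: for an ordinal `α`, `Vh α = ⋃_{β ∈ α} 𝒫 (Vh β)` is `V_α`. -/
def Vh : ZFSet → ZFSet :=
  ZFSet.mem_wf.fix fun α ih =>
    ZFSet.sUnion (zimage (fun β => if h : β ∈ α then ZFSet.powerset (ih β h) else ∅) α)

/-- The collection of all subsets of `X` that are definable over `(X, ∈)` with parameters
from `X` (by a first-order formula of set theory). -/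
def DefSet (X : ZFSet) : ZFSet :=
  ZFSet.sep (fun s => ∃ (φ : Fml Empty) (v : ℕ → ZFSet), (∀ n, v n ∈ X) ∧
    ∀ z, z ∈ s ↔ z ∈ X ∧ ZSat (· ∈ X) noPred φ (Function.update v 0 z)) (ZFSet.powerset X)

/-- `LV V α`: level `α` of the constructible hierarchy built above `V`;
`LV V α = V ∪ ⋃_{β ∈ α} DefSet (LV V β)` (so `LV V 0 = V`, `LV V (β+1) = DefSet (LV V β)`
for transitive `V`, with unions at limits). -/
def LV (V : ZFSet) : ZFSet → ZFSet :=
  ZFSet.mem_wf.fix fun α ih =>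
    V ∪ ZFSet.sUnion (zimage (fun β => if h : β ∈ α then DefSet (ih β h) else ∅) α)

/-- Membership in the constructible universe `L`. -/
def LMem (x : ZFSet) : Prop := ∃ α : ZFSet, IsOrd α ∧ x ∈ LV ∅ α

/-- Valuation with `a` at variable `0`, `b` at variable `1`. -/
def v2 (a b : ZFSet) : ℕ → ZFSet := fun n => if n = 0 then a else if n = 1 then b else ∅

/-- Valuation with `a, b, c` at variables `0, 1, 2`. -/
def v3 (a b c : ZFSet) : ℕ → ZFSet :=
  fun n => if n = 0 then a else if n = 1 then b else if n = 2 then c else ∅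

end

/-- `n` is good (with respect to the Gödel numbering `g` of sentences of set theory with an
extra unary predicate symbol `S`): for every ordinal `κ` there is a unique set `S` such that
`(V_κ, ∈, S)` satisfies `φ_n`. -/
def goodN (g : ℕ → Fml Unit) (n : ℕ) : Prop :=
  ∀ κ : ZFSet.{0}, IsOrd κ →
    ∃! S : ZFSet, S ⊆ Vh κ ∧ ∀ v : ℕ → ZFSet, (∀ k, v k ∈ Vh κ) →
      ZSat (· ∈ Vh κ) (fun _ x => x ∈ S) (g n) v

/-- `P` is a predicate as described in the general extension: `P n` is empty if `n` is not
good, and otherwise `φ_n` is true (over the whole universe) with the predicate symbol `S`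
interpreted as `P n`. -/
def IsGeneralExtension (g : ℕ → Fml Unit) (P : ℕ → ZFSet.{0} → Prop) : Prop :=
  ∀ n : ℕ,
    (¬ goodN g n → ∀ x, ¬ P n x) ∧
    (goodN g n → ∀ v : ℕ → ZFSet, ZSat (fun _ => True) (fun _ x => P n x) (g n) v)

/-! ### Auxiliary development: reflection -/

section ReflectionAux

open ZFSet
open scoped Classical

/-- Membership in `zimage`. -/
theorem mem_zimage {f : ZFSet.{0} → ZFSet.{0}} {x y : ZFSet.{0}} :
    y ∈ zimage f x ↔ ∃ z ∈ x, f z = y :=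
  @ZFSet.mem_image f (Classical.allZFSetDefinable _) x y

theorem Vh_def (α : ZFSet.{0}) :
    Vh α = ZFSet.sUnion (zimage (fun β => if _ : β ∈ α then ZFSet.powerset (Vh β) else ∅) α) := by
  unfold Vh
  rw [WellFounded.fix_eq]

theorem mem_Vh {x α : ZFSet.{0}} : x ∈ Vh α ↔ ∃ β ∈ α, x ⊆ Vh β := by
  rw [Vh_def α, ZFSet.mem_sUnion]
  constructor
  · rintro ⟨w, hw, hxw⟩
    rw [mem_zimage] at hw
    obtain ⟨β, hβ, rfl⟩ := hw
    rw [dif_pos hβ, ZFSet.mem_powerset] at hxw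
    exact ⟨β, hβ, hxw⟩
  · rintro ⟨β, hβ, hsub⟩
    exact ⟨_, mem_zimage.2 ⟨β, hβ, dif_pos hβ⟩, ZFSet.mem_powerset.2 hsub⟩

/-- The von Neumann ordinal associated to an ordinal. -/
noncomputable def ordZ : Ordinal.{0} → ZFSet.{0} :=
  Ordinal.lt_wf.fix fun o ih =>
    ZFSet.range fun i : Shrink.{0} (Set.Iio o) =>
      ih ((equivShrink (Set.Iio o)).symm i).1 ((equivShrink (Set.Iio o)).symm i).2

theorem ordZ_def (o : Ordinal.{0}) :
    ordZ o = ZFSet.range fun i : Shrink.{0} (Set.Iio o) =>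
      ordZ ((equivShrink (Set.Iio o)).symm i).1 := by
  unfold ordZ
  rw [WellFounded.fix_eq]

theorem mem_ordZ {x : ZFSet.{0}} {o : Ordinal.{0}} :
    x ∈ ordZ o ↔ ∃ o' < o, x = ordZ o' := by
  rw [ordZ_def, ZFSet.mem_range]
  constructor
  · rintro ⟨i, rfl⟩
    exact ⟨_, ((equivShrink (Set.Iio o)).symm i).2, rfl⟩
  · rintro ⟨o', ho', rfl⟩
    exact ⟨equivShrink _ ⟨o', ho'⟩, by simp⟩

theorem ordZ_mem_ordZ {o' o : Ordinal.{0}} (h : o' < o) : ordZ o' ∈ ordZ o :=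
  mem_ordZ.2 ⟨o', h, rfl⟩

theorem ordZ_transitive (o : Ordinal.{0}) : (ordZ o).IsTransitive := by
  intro y hy
  obtain ⟨o', ho', rfl⟩ := mem_ordZ.1 hy
  rw [ZFSet.subset_def]
  intro z hz
  obtain ⟨o'', ho'', rfl⟩ := mem_ordZ.1 hz
  exact ordZ_mem_ordZ (ho''.trans ho')

theorem isOrd_ordZ (o : Ordinal.{0}) : IsOrd (ordZ o) := by
  refine ⟨ordZ_transitive o, fun y hy => ?_⟩
  obtain ⟨o', _, rfl⟩ := mem_ordZ.1 hy
  exact ordZ_transitive o'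

theorem mem_Vh_ordZ' (o : Ordinal.{0}) : ∀ x : ZFSet.{0}, x ∈ Vh (ordZ o) ↔ x.rank < o := by
  induction o using Ordinal.induction with
  | _ o IH =>
    intro x
    rw [mem_Vh]
    constructor
    · rintro ⟨β, hβ, hsub⟩
      obtain ⟨o', ho', rfl⟩ := mem_ordZ.1 hβ
      have hle : x.rank ≤ o' :=
        ZFSet.rank_le_iff.2 fun y hy => (IH o' ho' y).1 (hsub hy)
      exact hle.trans_lt ho'
    · intro h
      refine ⟨ordZ x.rank, ordZ_mem_ordZ h, ZFSet.subset_def.2 fun y hy => ?_⟩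
      exact (IH _ h y).2 (ZFSet.rank_lt_of_mem hy)

theorem mem_Vh_ordZ {o : Ordinal.{0}} {x : ZFSet.{0}} : x ∈ Vh (ordZ o) ↔ x.rank < o :=
  mem_Vh_ordZ' o x

namespace Fml

variable {P P' : Type}

/-- The list of subformulas of a formula. -/
def subs : Fml P → List (Fml P)
  | .mem i j => [.mem i j]
  | .eq i j => [.eq i j]
  | .pr p i => [.pr p i]
  | .not φ => .not φ :: subs φ
  | .and φ ψ => .and φ ψ :: (subs φ ++ subs ψ)
  | .all n φ => .all n φ :: subs φ

theorem mem_subs_self (φ : Fml P) : φ ∈ subs φ := by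
  cases φ <;> simp [subs]

theorem subs_subset : ∀ {φ ψ : Fml P}, ψ ∈ subs φ → ∀ {χ}, χ ∈ subs ψ → χ ∈ subs φ := by
  intro φ
  induction φ with
  | mem i j =>
    intro ψ hψ χ hχ
    simp only [subs, List.mem_singleton] at hψ
    subst hψ; exact hχ
  | eq i j =>
    intro ψ hψ χ hχ
    simp only [subs, List.mem_singleton] at hψ
    subst hψ; exact hχ
  | pr p i =>
    intro ψ hψ χ hχ
    simp only [subs, List.mem_singleton] at hψ
    subst hψ; exact hχ
  | not φ ih =>
    intro ψ hψ χ hχ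
    rcases List.mem_cons.1 hψ with rfl | hψ
    · exact hχ
    · exact List.mem_cons_of_mem _ (ih hψ hχ)
  | and φ₁ φ₂ ih₁ ih₂ =>
    intro ψ hψ χ hχ
    rcases List.mem_cons.1 hψ with rfl | hψ
    · exact hχ
    · rcases List.mem_append.1 hψ with h | h
      · exact List.mem_cons_of_mem _ (List.mem_append_left _ (ih₁ h hχ))
      · exact List.mem_cons_of_mem _ (List.mem_append_right _ (ih₂ h hχ))
  | all n φ ih =>
    intro ψ hψ χ hχ
    rcases List.mem_cons.1 hψ with rfl | hψ
    · exact hχ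
    · exact List.mem_cons_of_mem _ (ih hψ hχ)

/-- Satisfaction only depends on the values of the valuation at free variables. -/
theorem sat_congr {M : Type*} {Dom : M → Prop} {E : M → M → Prop} {I : P → M → Prop}
    (φ : Fml P) : ∀ {v w : ℕ → M}, (∀ k ∈ free φ, v k = w k) →
    (Sat Dom E I φ v ↔ Sat Dom E I φ w) := by
  induction φ with
  | mem i j =>
    intro v w h
    show E (v i) (v j) ↔ E (w i) (w j)
    rw [h i (by simp [free]), h j (by simp [free])]
  | eq i j =>
    intro v w h
    show v i = v j ↔ w i = w j
    rw [h i (by simp [free]), h j (by simp [free])]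
  | pr p i =>
    intro v w h
    show I p (v i) ↔ I p (w i)
    rw [h i (by simp [free])]
  | not φ ih =>
    intro v w h
    exact not_congr (ih h)
  | and φ₁ φ₂ ih₁ ih₂ =>
    intro v w h
    exact and_congr (ih₁ fun k hk => h k (Finset.mem_union_left _ hk))
      (ih₂ fun k hk => h k (Finset.mem_union_right _ hk))
  | all n φ ih =>
    intro v w h
    refine forall_congr' fun a => imp_congr_right fun _ => ih fun k hk => ?_
    rcases eq_or_ne k n with rfl | hne
    · simp
    · rw [Function.update_of_ne hne, Function.update_of_ne hne]
      exact h k (Finset.mem_erase.2 ⟨hne, hk⟩)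

/-- Core reflection lemma: if `Vh κ` contains witnesses for all universally quantified
subformulas, then satisfaction relativized to `Vh κ` agrees with global satisfaction. -/
theorem sat_reflect_core (I : P → ZFSet.{0} → Prop) (κ : ZFSet.{0}) :
    ∀ φ : Fml P,
      (∀ m χ, Fml.all m χ ∈ subs φ → ∀ v : ℕ → ZFSet, (∀ k, v k ∈ Vh κ) →
        (∃ a, ¬ Sat (fun _ => True) (· ∈ ·) I χ (Function.update v m a)) →
        ∃ a, a ∈ Vh κ ∧ ¬ Sat (fun _ => True) (· ∈ ·) I χ (Function.update v m a)) →
      ∀ v : ℕ → ZFSet, (∀ k, v k ∈ Vh κ) →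
        (Sat (· ∈ Vh κ) (· ∈ ·) (fun p y => I p y ∧ y ∈ Vh κ) φ v ↔
          Sat (fun _ => True) (· ∈ ·) I φ v) := by
  intro φ
  induction φ with
  | mem i j => intro _ v _; exact Iff.rfl
  | eq i j => intro _ v _; exact Iff.rfl
  | pr p i =>
    intro _ v hv
    show (I p (v i) ∧ v i ∈ Vh κ) ↔ I p (v i)
    exact and_iff_left (hv i)
  | not φ ih =>
    intro Hw v hv
    exact not_congr (ih (fun m χ hχ => Hw m χ (List.mem_cons_of_mem _ hχ)) v hv)
  | and φ₁ φ₂ ih₁ ih₂ =>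
    intro Hw v hv
    exact and_congr
      (ih₁ (fun m χ hχ => Hw m χ (List.mem_cons_of_mem _ (List.mem_append_left _ hχ))) v hv)
      (ih₂ (fun m χ hχ => Hw m χ (List.mem_cons_of_mem _ (List.mem_append_right _ hχ))) v hv)
  | all m φ ih =>
    intro Hw v hv
    have hsub := fun m' χ hχ => Hw m' χ (List.mem_cons_of_mem _ hχ)
    have hupd : ∀ a : ZFSet, a ∈ Vh κ → ∀ k, Function.update v m a k ∈ Vh κ := by
      intro a ha k
      rcases eq_or_ne k m with rfl | hne
      · simpa using ha
      · rw [Function.update_of_ne hne]; exact hv k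
    constructor
    · intro hrel a _
      by_contra hbad
      obtain ⟨b, hbV, hnb⟩ := Hw m φ (List.mem_cons_self) v hv ⟨a, hbad⟩
      exact hnb ((ih hsub _ (hupd b hbV)).1 (hrel b hbV))
    · intro hglob a ha
      exact (ih hsub _ (hupd a ha)).2 (hglob a trivial)

open Classical in
/-- Ordinal bounding a witness for the failure of `∀ a, χ[a/m]` under valuation `v`. -/
noncomputable def wOrd (I : P → ZFSet.{0} → Prop) (m : ℕ) (χ : Fml P)
    (v : ℕ → ZFSet.{0}) : Ordinal.{0} :=
  if h : ∃ a, ¬ Sat (fun _ => True) (· ∈ ·) I χ (Function.update v m a) then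
    Order.succ (ZFSet.rank h.choose) else 0

open Classical in
theorem wOrd_spec {I : P → ZFSet.{0} → Prop} {m : ℕ} {χ : Fml P} {v : ℕ → ZFSet.{0}}
    (h : ∃ a, ¬ Sat (fun _ => True) (· ∈ ·) I χ (Function.update v m a)) :
    ∃ a, ZFSet.rank a < wOrd I m χ v ∧
      ¬ Sat (fun _ => True) (· ∈ ·) I χ (Function.update v m a) :=
  ⟨h.choose, by rw [wOrd, dif_pos h]; exact Order.lt_succ _, h.choose_spec⟩

/-- Contribution of a subformula to the witness bound. -/
noncomputable def contrib (I : P → ZFSet.{0} → Prop) : Fml P → (ℕ → ZFSet.{0}) → Ordinal.{0}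
  | .all m χ => wOrd I m χ
  | _ => fun _ => 0

/-- An increasing chain of ordinals closing off under witnesses for subformulas of `φ`. -/
noncomputable def lam (I : P → ZFSet.{0} → Prop) (φ : Fml P) (x0 : ZFSet.{0}) :
    ℕ → Ordinal.{0}
  | 0 => Order.succ x0.rank
  | n + 1 => max (Order.succ (lam I φ x0 n))
      (⨆ p : {q // q ∈ subs φ} × (ℕ → (Vh (ordZ (lam I φ x0 n))).toSet),
        contrib I p.1.1 fun k => (p.2 k : ZFSet))

theorem lam_lt_succ (I : P → ZFSet.{0} → Prop) (φ : Fml P) (x0 : ZFSet.{0}) (n : ℕ) :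
    lam I φ x0 n < lam I φ x0 (n + 1) :=
  (Order.lt_succ _).trans_le (le_max_left _ _)

theorem lam_pos (I : P → ZFSet.{0} → Prop) (φ : Fml P) (x0 : ZFSet.{0}) (n : ℕ) :
    0 < lam I φ x0 n := by
  induction n with
  | zero => exact zero_le.trans_lt (Order.lt_succ _)
  | succ n ih => exact ih.trans (lam_lt_succ I φ x0 n)

theorem lam_lt_iSup (I : P → ZFSet.{0} → Prop) (φ : Fml P) (x0 : ZFSet.{0}) (n : ℕ) :
    lam I φ x0 n < ⨆ k, lam I φ x0 k :=
  (lam_lt_succ I φ x0 n).trans_le (Ordinal.le_iSup _ (n + 1))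

/-- **Reflection.** For every interpretation `I`, formula `φ` and set `x0` there is an
ordinal `κ` with `x0 ∈ V_κ` such that all subformulas of `φ` are absolute between
`(V_κ, ∈, I ∩ V_κ)` and the universe `(V, ∈, I)`. -/
theorem reflect (I : P → ZFSet.{0} → Prop) (φ : Fml P) (x0 : ZFSet.{0}) :
    ∃ κ : ZFSet.{0}, IsOrd κ ∧ x0 ∈ Vh κ ∧ ∀ ψ ∈ subs φ, ∀ v : ℕ → ZFSet,
      (∀ k, v k ∈ Vh κ) →
      (Sat (· ∈ Vh κ) (· ∈ ·) (fun p y => I p y ∧ y ∈ Vh κ) ψ v ↔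
        Sat (fun _ => True) (· ∈ ·) I ψ v) := by
  classical
  set Λ : Ordinal.{0} := ⨆ k, lam I φ x0 k with hΛ
  refine ⟨ordZ Λ, isOrd_ordZ Λ, ?_, ?_⟩
  · rw [mem_Vh_ordZ]
    exact (Order.lt_succ _).trans_le (Ordinal.le_iSup (lam I φ x0) 0)
  · intro ψ hψ
    refine sat_reflect_core I (ordZ Λ) ψ ?_
    intro m χ hχ v hv hex
    have hallmem : Fml.all m χ ∈ subs φ := subs_subset hψ hχ
    set F : Finset ℕ := free (Fml.all m χ) with hF
    have hrk : ∀ k, (v k).rank < Λ := fun k => mem_Vh_ordZ.1 (hv k)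
    have hfin : F.sup (fun k => (v k).rank) < Λ := by
      rw [Finset.sup_lt_iff ((lam_pos I φ x0 0).trans_le (Ordinal.le_iSup _ 0))]
      exact fun k _ => hrk k
    obtain ⟨N, hN⟩ := Ordinal.lt_iSup_iff.1 hfin
    set v' : ℕ → ZFSet.{0} := fun k => if k ∈ F then v k else ∅ with hv'def
    have hv'mem : ∀ k, v' k ∈ (Vh (ordZ (lam I φ x0 N))).toSet := by
      intro k
      change v' k ∈ Vh (ordZ (lam I φ x0 N))
      rw [mem_Vh_ordZ]
      by_cases hk : k ∈ F
      · simp only [hv'def, if_pos hk]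
        exact (Finset.le_sup (f := fun k => (v k).rank) hk).trans_lt hN
      · simp only [hv'def, if_neg hk, ZFSet.rank_empty]
        exact lam_pos I φ x0 N
    have hagree : ∀ b : ZFSet, ∀ k ∈ free χ,
        Function.update v m b k = Function.update v' m b k := by
      intro b k hk
      rcases eq_or_ne k m with rfl | hne
      · simp
      · rw [Function.update_of_ne hne, Function.update_of_ne hne]
        have hkF : k ∈ F := by
          rw [hF]
          exact Finset.mem_erase.2 ⟨hne, hk⟩
        simp [hv'def, hkF]
    have hex' : ∃ a, ¬ Sat (fun _ => True) (· ∈ ·) I χ (Function.update v' m a) := by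
      obtain ⟨a, ha⟩ := hex
      exact ⟨a, fun hs => ha ((sat_congr χ (hagree a)).2 hs)⟩
    obtain ⟨a, hrka, hna⟩ := wOrd_spec hex'
    have hb : wOrd I m χ v' ≤ lam I φ x0 (N + 1) := by
      haveI : ∀ x : ZFSet.{0}, Small.{0} x.toSet := fun x => ZFSet.small_coe x
      have hle := Ordinal.le_iSup
        (fun p : {q // q ∈ subs φ} × (ℕ → (Vh (ordZ (lam I φ x0 N))).toSet) =>
          contrib I p.1.1 fun k => (p.2 k : ZFSet))
        ⟨⟨Fml.all m χ, hallmem⟩, fun k => ⟨v' k, hv'mem k⟩⟩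
      have heq : contrib I (Fml.all m χ) (fun k => ((⟨v' k, hv'mem k⟩ :
          (Vh (ordZ (lam I φ x0 N))).toSet) : ZFSet)) = wOrd I m χ v' := rfl
      calc wOrd I m χ v' ≤ _ := heq ▸ hle
        _ ≤ lam I φ x0 (N + 1) := le_max_right _ _
    refine ⟨a, ?_, fun hs => hna ((sat_congr χ (hagree a)).1 hs)⟩
    rw [mem_Vh_ordZ]
    exact (hrka.trans_le hb).trans (lam_lt_iSup I φ x0 (N + 1))


theorem sat_congrI {M : Type*} {Dom : M → Prop} {E : M → M → Prop} {I I' : P → M → Prop}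
    (h : ∀ p y, I p y ↔ I' p y) (φ : Fml P) (v : ℕ → M) :
    Sat Dom E I φ v ↔ Sat Dom E I' φ v := by
  have hII : I = I' := funext fun p => funext fun y => propext (h p y)
  rw [hII]

/-- Relabelling the predicate symbols of a formula. -/
def retag (f : P → P') : Fml P → Fml P'
  | .mem i j => .mem i j
  | .eq i j => .eq i j
  | .pr p i => .pr (f p) i
  | .not φ => .not (retag f φ)
  | .and φ ψ => .and (retag f φ) (retag f ψ)
  | .all n φ => .all n (retag f φ)

theorem sat_retag {M : Type*} {Dom : M → Prop} {E : M → M → Prop} (I : P' → M → Prop)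
    (f : P → P') (φ : Fml P) : ∀ v : ℕ → M,
    (Sat Dom E I (retag f φ) v ↔ Sat Dom E (fun p => I (f p)) φ v) := by
  induction φ with
  | mem i j => intro v; exact Iff.rfl
  | eq i j => intro v; exact Iff.rfl
  | pr p i => intro v; exact Iff.rfl
  | not φ ih => intro v; exact not_congr (ih v)
  | and φ₁ φ₂ ih₁ ih₂ => intro v; exact and_congr (ih₁ v) (ih₂ v)
  | all n φ ih =>
    intro v
    exact forall_congr' fun a => imp_congr_right fun _ => ih _

end Fml

end ReflectionAux

/-- In the general extension of set theory by the predicate `P`, the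
predicate `P` is unique: fixing a Gödel numbering `g` of the sentences of set theory with an
extra unary predicate symbol `S`, any two predicates `P`, `Q` satisfying the description
(`P n` empty for bad `n`; `φ_n` true with `S` interpreted as `P n` for good `n`) coincide —
in particular (by reflection) the uniqueness of `S` over all the models `(V_κ, ∈, S)`
implies the uniqueness of each `P n`. -/
theorem general_extension_unique (g : ℕ → Fml Unit) (hg : Function.Surjective g)
    (P Q : ℕ → ZFSet.{0} → Prop) (hP : IsGeneralExtension g P) (hQ : IsGeneralExtension g Q) :
    P = Q := by
  funext n x
  by_cases hgood : goodN g n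
  · obtain ⟨κ, hκ, hxκ, href⟩ := Fml.reflect (fun b y => cond b (P n y) (Q n y))
      (Fml.and (Fml.retag (fun _ => true) (g n)) (Fml.retag (fun _ => false) (g n))) x
    have hmem₁ : Fml.retag (fun _ : Unit => true) (g n) ∈ Fml.subs
        (Fml.and (Fml.retag (fun _ => true) (g n)) (Fml.retag (fun _ => false) (g n))) :=
      List.mem_cons_of_mem _ (List.mem_append_left _ (Fml.mem_subs_self _))
    have hmem₂ : Fml.retag (fun _ : Unit => false) (g n) ∈ Fml.subs
        (Fml.and (Fml.retag (fun _ => true) (g n)) (Fml.retag (fun _ => false) (g n))) :=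
      List.mem_cons_of_mem _ (List.mem_append_right _ (Fml.mem_subs_self _))
    have hPmodel : ZFSet.sep (fun y => P n y) (Vh κ) ⊆ Vh κ ∧
        ∀ v : ℕ → ZFSet, (∀ k, v k ∈ Vh κ) →
          ZSat (· ∈ Vh κ) (fun _ x => x ∈ ZFSet.sep (fun y => P n y) (Vh κ)) (g n) v := by
      refine ⟨ZFSet.subset_def.2 fun z hz => (ZFSet.mem_sep.1 hz).1, fun v hv => ?_⟩
      have hglob : Fml.Sat (fun _ => True) (· ∈ ·) (fun b y => cond b (P n y) (Q n y))
          (Fml.retag (fun _ : Unit => true) (g n)) v :=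
        (Fml.sat_retag _ _ _ v).2 ((hP n).2 hgood v)
      have hrel := (Fml.sat_retag _ _ _ v).1 ((href _ hmem₁ v hv).2 hglob)
      exact (Fml.sat_congrI (fun _ y =>
        ⟨fun h => ZFSet.mem_sep.2 ⟨h.2, h.1⟩,
         fun h => ⟨(ZFSet.mem_sep.1 h).2, (ZFSet.mem_sep.1 h).1⟩⟩) (g n) v).1 hrel
    have hQmodel : ZFSet.sep (fun y => Q n y) (Vh κ) ⊆ Vh κ ∧
        ∀ v : ℕ → ZFSet, (∀ k, v k ∈ Vh κ) →
          ZSat (· ∈ Vh κ) (fun _ x => x ∈ ZFSet.sep (fun y => Q n y) (Vh κ)) (g n) v := by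
      refine ⟨ZFSet.subset_def.2 fun z hz => (ZFSet.mem_sep.1 hz).1, fun v hv => ?_⟩
      have hglob : Fml.Sat (fun _ => True) (· ∈ ·) (fun b y => cond b (P n y) (Q n y))
          (Fml.retag (fun _ : Unit => false) (g n)) v :=
        (Fml.sat_retag _ _ _ v).2 ((hQ n).2 hgood v)
      have hrel := (Fml.sat_retag _ _ _ v).1 ((href _ hmem₂ v hv).2 hglob)
      exact (Fml.sat_congrI (fun _ y =>
        ⟨fun h => ZFSet.mem_sep.2 ⟨h.2, h.1⟩,
         fun h => ⟨(ZFSet.mem_sep.1 h).2, (ZFSet.mem_sep.1 h).1⟩⟩) (g n) v).1 hrel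
    have hPQ : ZFSet.sep (fun y => P n y) (Vh κ) = ZFSet.sep (fun y => Q n y) (Vh κ) :=
      (hgood κ hκ).unique hPmodel hQmodel
    refine propext ⟨fun h => ?_, fun h => ?_⟩
    · have hx : x ∈ ZFSet.sep (fun y => P n y) (Vh κ) := ZFSet.mem_sep.2 ⟨hxκ, h⟩
      rw [hPQ] at hx
      exact (ZFSet.mem_sep.1 hx).2
    · have hx : x ∈ ZFSet.sep (fun y => Q n y) (Vh κ) := ZFSet.mem_sep.2 ⟨hxκ, h⟩
      rw [← hPQ] at hx
      exact (ZFSet.mem_sep.1 hx).2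
  · exact propext (iff_of_false ((hP n).1 hgood x) ((hQ n).1 hgood x))
end
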